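/- Recursion for the alternating decomposition sum (expansion step in the proof of Lemma 3.2). For each nonempty word w over A define D(w) := Σ_{k=1}^{|w|} (−1)^{k−1} Σ_{(u_1,…,u_k) : each u_i nonempty, u_1⋯u_k = w} u_1 ⧢ ⋯ ⧢ u_k ∈ ℝ⟨A⟩. Then for every word w = a_1⋯a_{n+1} with n ≥ 1, D(w) = a_1⋯a_{n+1} − Σ_{k=0}^{n−1} (a_1⋯a_{k+1}) ⧢ D(a_{k+2}⋯a_{n+1}). -/

import Mathlib

/-!
Words over an alphabet `A` are elements of `List A`; the free noncommutative
algebra `ℝ⟨A⟩` is realised as the free `ℝ`-module `List A →₀ ℝ` with the words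
as an `ℝ`-basis (a word `w` is the element `Finsupp.single w 1`, and
concatenation of words is list append).
-/

variable {A : Type*}

/-- The shuffle product of two words, valued in `ℝ⟨A⟩ = List A →₀ ℝ`:
`1 ⧢ w = w ⧢ 1 = w` and
`(a·u) ⧢ (b·v) = a·(u ⧢ (b·v)) + b·((a·u) ⧢ v)`,
where prepending a letter to every word of an element is `Finsupp.mapDomain (List.cons _)`. -/
noncomputable def shuffle : List A → List A → (List A →₀ ℝ)
  | [], v => Finsupp.single v 1
  | u, [] => Finsupp.single u 1
  | a :: u, b :: v =>
      Finsupp.mapDomain (List.cons a) (shuffle u (b :: v)) +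
        Finsupp.mapDomain (List.cons b) (shuffle (a :: u) v)
  termination_by u v => u.length + v.length

/-- The bilinear extension of the shuffle product to all of `ℝ⟨A⟩`. -/
noncomputable def shP (P Q : List A →₀ ℝ) : List A →₀ ℝ :=
  P.sum fun u cu => Q.sum fun v cv => (cu * cv) • shuffle u v

/-- The shuffle product `u₁ ⧢ u₂ ⧢ ⋯ ⧢ u_k` of a finite list of words
(the empty shuffle being the empty word, the unit of the shuffle algebra). -/
noncomputable def shuffleList (L : List (List A)) : List A →₀ ℝ :=
  L.foldr (fun u acc => shP (Finsupp.single u 1) acc) (Finsupp.single [] 1)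

/-- The unsigned reversal `ρ`, with `ρ(a₁⋯aₙ) = aₙ⋯a₁` on words, extended linearly. -/
noncomputable def rho (P : List A →₀ ℝ) : List A →₀ ℝ :=
  Finsupp.mapDomain List.reverse P

/-- The signed reversal `α`, with `α(a₁⋯aₙ) = (-1)ⁿ aₙ⋯a₁` on words, extended linearly. -/
noncomputable def alphaMap (P : List A →₀ ℝ) : List A →₀ ℝ :=
  P.sum fun w c => Finsupp.single w.reverse ((-1 : ℝ) ^ w.length * c)

/-- `D w = Σ_{k=1}^{|w|} (−1)^{k−1} Σ_{u₁⋯u_k = w, each uᵢ nonempty} u₁ ⧢ ⋯ ⧢ u_k`: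
the ordered decompositions of `w` into `k` nonempty factors are parametrised by the
compositions `c` of `|w|` with `c.length = k`, the factors being
`w.splitWrtComposition c`. -/
noncomputable def D (w : List A) : List A →₀ ℝ :=
  ∑ c : Composition w.length,
    ((-1 : ℝ)) ^ (c.length - 1) • shuffleList (w.splitWrtComposition c)

/-! Sort the decompositions `u₁ ⋯ u_k` of `w = a₁ ⋯ a_{n+1}` by their first factor
`u₁ = a₁ ⋯ a_{j+1}`. For `j < n` the remaining factors run over all decompositions of
`a_{j+2} ⋯ a_{n+1}` with one factor fewer, so by linearity of `u₁ ⧢ -` these terms add up to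
`-(u₁ ⧢ D(a_{j+2} ⋯ a_{n+1}))`; the only decomposition with `j = n` is `w` itself. -/

namespace Composition

lemma head_add_sum_tail {n : ℕ} (c : Composition n) (h : c.blocks ≠ []) :
    c.blocks.head h + c.blocks.tail.sum = n := by
  rw [← List.sum_cons, List.cons_head_tail, c.blocks_sum]

/-- A composition of `m + 1` is a first block `j + 1` followed by a composition of `m - j`. -/
def firstBlockEquiv (m : ℕ) : (Σ j : Fin (m + 1), Composition (m - j)) ≃ Composition (m + 1) where
  toFun x :=
    { blocks := ((x.1 : ℕ) + 1) :: x.2.blocks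
      blocks_pos := by
        rintro i (_ | ⟨_, hi⟩)
        exacts [Nat.succ_pos _, x.2.blocks_pos hi]
      blocks_sum := by
        have := x.1.isLt
        simp only [List.sum_cons, x.2.blocks_sum]
        omega }
  invFun c :=
    have hne : c.blocks ≠ [] := by simp [blocks_eq_nil]
    have hsum := c.head_add_sum_tail hne
    ⟨⟨c.blocks.head hne - 1, by omega⟩,
      { blocks := c.blocks.tail
        blocks_pos := fun hi => c.blocks_pos (List.mem_of_mem_tail hi)
        blocks_sum := by
          have := c.one_le_blocks (List.head_mem hne)
          simp only
          omega }⟩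
  left_inv _ := rfl
  right_inv c := by
    have hne : c.blocks ≠ [] := by simp [blocks_eq_nil]
    have := c.one_le_blocks (List.head_mem hne)
    ext1
    simp only
    rw [Nat.sub_add_cancel this, List.cons_head_tail]

@[simp]
lemma firstBlockEquiv_blocks {m : ℕ} (j : Fin (m + 1)) (c : Composition (m - j)) :
    (firstBlockEquiv m ⟨j, c⟩).blocks = ((j : ℕ) + 1) :: c.blocks :=
  rfl

@[simp]
lemma firstBlockEquiv_length {m : ℕ} (j : Fin (m + 1)) (c : Composition (m - j)) :
    (firstBlockEquiv m ⟨j, c⟩).length = c.length + 1 := by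
  simp [Composition.length]

lemma _root_.List.splitWrtComposition_firstBlockEquiv {α : Type*} (w : List α) {m : ℕ}
    (j : Fin (m + 1)) (c : Composition (m - j)) :
    w.splitWrtComposition (firstBlockEquiv m ⟨j, c⟩) =
      w.take (j + 1) :: (w.drop (j + 1)).splitWrtComposition c := by
  simp [List.splitWrtComposition, List.splitWrtCompositionAux_cons]

instance : Unique (Composition 0) where
  default := ones 0
  uniq _ := eq_ones_iff_le_length.2 (Nat.zero_le _)

end Composition

open Finset Finsupp

lemma shuffle_nil_right (u : List A) : shuffle u [] = single u 1 := by
  cases u <;> simp [shuffle]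

lemma shP_single_left (u : List A) (Q : List A →₀ ℝ) :
    shP (single u 1) Q = linearCombination ℝ (shuffle u) Q := by
  rw [shP, sum_single_index] <;> simp [linearCombination_apply]

lemma shuffleList_cons (u : List A) (L : List (List A)) :
    shuffleList (u :: L) = shP (single u 1) (shuffleList L) :=
  rfl

lemma shuffleList_singleton (u : List A) : shuffleList [u] = single u 1 := by
  simp [shuffleList, shP_single_left, shuffle_nil_right]

lemma sum_compositions_shP_eq_neg_shP_D (u v : List A) {n : ℕ} (hv : v.length = n)
    (hn : 0 < n) :
    ∑ c : Composition n,
        (-1 : ℝ) ^ c.length • shP (single u 1) (shuffleList (v.splitWrtComposition c)) =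
      -shP (single u 1) (D v) := by
  subst hv
  simp only [D, shP_single_left, map_sum, map_smul, ← sum_neg_distrib, ← neg_smul]
  refine Fintype.sum_congr _ _ fun c => ?_
  have hc : c.length = c.length - 1 + 1 := (Nat.sub_add_cancel (c.length_pos_of_pos hn)).symm
  rw [hc, pow_succ, mul_neg_one, Nat.add_sub_cancel]

theorem D_eq_single_sub_sum (m : ℕ) (w : List A) (hw : w.length = m + 1) :
    D w = single w 1 - ∑ k ∈ range m, shP (single (w.take (k + 1)) 1) (D (w.drop (k + 1))) := by
  have hsplit : D w = ∑ j : Fin (m + 1), ∑ c : Composition (m - j),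
      (-1 : ℝ) ^ c.length •
        shP (single (w.take (j + 1)) 1) (shuffleList ((w.drop (j + 1)).splitWrtComposition c)) := by
    rw [D, hw, ← (Composition.firstBlockEquiv m).sum_comp, Fintype.sum_sigma]
    simp only [Composition.firstBlockEquiv_length, List.splitWrtComposition_firstBlockEquiv,
      shuffleList_cons, Nat.add_sub_cancel]
  rw [hsplit, Fin.sum_univ_castSucc, add_comm, sub_eq_add_neg]
  congr 1
  · generalize hk : m - (Fin.last m : ℕ) = k
    obtain rfl : k = 0 := by simp [← hk]
    simp only [Fin.val_last, List.take_of_length_le hw.le, List.drop_of_length_le hw.le]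
    rw [Fintype.sum_unique]
    -- the unique composition of `0`, `ones 0`, has no blocks
    change (-1 : ℝ) ^ 0 • shuffleList [w] = _
    rw [pow_zero, one_smul, shuffleList_singleton]
  · rw [← Fin.sum_univ_eq_sum_range
      (fun k => shP (single (w.take (k + 1)) 1) (D (w.drop (k + 1)))), ← sum_neg_distrib]
    exact Fintype.sum_congr _ _ fun i =>
      sum_compositions_shP_eq_neg_shP_D _ _ (by simp [hw]) (by simp)

theorem D_recursion_general (n : ℕ) (a : Fin (n + 1) → A) :
    D (List.ofFn a) =
      Finsupp.single (List.ofFn a) (1 : ℝ) -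
        ∑ k ∈ Finset.range n,
          shP (Finsupp.single ((List.ofFn a).take (k + 1)) 1)
            (D ((List.ofFn a).drop (k + 1))) :=
  D_eq_single_sub_sum n _ List.length_ofFn

/-- **Recursion for the alternating decomposition sum** (expansion step in the proof of
Lemma 3.2): for every word `w = a₁⋯a_{n+1}` with `n ≥ 1`,
`D(w) = w − Σ_{k=0}^{n−1} (a₁⋯a_{k+1}) ⧢ D(a_{k+2}⋯a_{n+1})`. -/
theorem D_recursion (n : ℕ) (hn : 1 ≤ n) (a : Fin (n + 1) → A) :
    D (List.ofFn a) =
      Finsupp.single (List.ofFn a) (1 : ℝ) -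
        ∑ k ∈ Finset.range n,
          shP (Finsupp.single ((List.ofFn a).take (k + 1)) 1)
            (D ((List.ofFn a).drop (k + 1))) :=
  D_recursion_general n a
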